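/- (Correctness of the query semantics, semantic form of Proposition 3.) Let D be a data graph, G = (N, Σ, P, S) a context-free grammar, x a vertex, and A ∈ N. Let reach be the least relation on V × (Σ ∪ N)* × V closed under: (i) reach(z, ε, z); (ii) reach(z, p, y) whenever p ∈ Σ and (z, p, y) ∈ D; (iii) reach(z, B, y) whenever B ∈ N, (B → α) ∈ P, and reach(z, α, y); (iv) reach(z, α₁α₂, y) whenever there is w with reach(z, α₁, w) and reach(w, α₂, y). Then the evaluation of the query pair (x, A), defined as Eval = { y | ∃ s ∈ Σ*, A ⇒* s and s ∈ traces(paths(x, y)) }, satisfies Eval = { y | reach(x, A, y) }. -/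

import Mathlib

/-!
A `Reach` proof of `x ⟶ y` along a sentential form `α` is a derivation tree for `α` laid over the
graph, so reading off its leaves gives a terminal word derived from `α` and traced from `x` to `y`.
Conversely, a terminal path is a `Reach` proof for its own trace, and `Reach` is closed under
backward derivation steps: since any `Reach` proof along `p ++ q` splits at an intermediate vertex,
a proof along `u ++ r.output ++ v` can be refolded into one along `u ++ [r.input] ++ v`.
-/

/-- `HasTrace D x s y` : `s` is the trace of some path in the data graph `D` from `x` to `y`. -/
inductive HasTrace {V E : Type*} (D : Set (V × E × V)) : V → List E → V → Prop
  | nil (x : V) : HasTrace D x [] x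
  | cons {x y z : V} {p : E} {s : List E} :
      (x, p, y) ∈ D → HasTrace D y s z → HasTrace D x (p :: s) z


/-- The least relation `reach` of Proposition 1. -/
inductive Reach {T V : Type*} (g : ContextFreeGrammar T) (D : Set (V × T × V)) :
    V → List (Symbol T g.NT) → V → Prop
  | eps (x : V) : Reach g D x [] x
  | term {x y : V} {p : T} : (x, p, y) ∈ D → Reach g D x [Symbol.terminal p] y
  | nonterm {x y : V} {r : ContextFreeRule T g.NT} :
      r ∈ g.rules → Reach g D x r.output y → Reach g D x [Symbol.nonterminal r.input] y
  | concat {x w y : V} {α₁ α₂ : List (Symbol T g.NT)} :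
      Reach g D x α₁ w → Reach g D w α₂ y → Reach g D x (α₁ ++ α₂) y

lemma HasTrace.append {V E : Type*} {D : Set (V × E × V)} {x w y : V} {s t : List E}
    (h₁ : HasTrace D x s w) (h₂ : HasTrace D w t y) : HasTrace D x (s ++ t) y := by
  induction h₁ with
  | nil => exact h₂
  | cons he _ ih => exact .cons he (ih h₂)

namespace Reach

variable {T V : Type*} {g : ContextFreeGrammar T} {D : Set (V × T × V)} {x y : V}

lemma split_of_singleton {a : Symbol T g.NT} {α₁ α₂ : List (Symbol T g.NT)}
    (h : Reach g D x [a] y) (he : α₁ ++ α₂ = [a]) :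
    ∃ w, Reach g D x α₁ w ∧ Reach g D w α₂ y := by
  rcases List.append_eq_singleton_iff.mp he with ⟨rfl, rfl⟩ | ⟨rfl, rfl⟩
  · exact ⟨x, .eps x, h⟩
  · exact ⟨y, h, .eps y⟩

lemma split {α₁ α₂ : List (Symbol T g.NT)} (h : Reach g D x (α₁ ++ α₂) y) :
    ∃ w, Reach g D x α₁ w ∧ Reach g D w α₂ y := by
  generalize hγ : α₁ ++ α₂ = γ at h
  induction h generalizing α₁ α₂ with
  | eps z =>
    obtain ⟨rfl, rfl⟩ := List.append_eq_nil_iff.mp hγ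
    exact ⟨z, .eps z, .eps z⟩
  | term hm => exact split_of_singleton (.term hm) hγ
  | nonterm hm hr => exact split_of_singleton (.nonterm hm hr) hγ
  | concat h₁ h₂ ih₁ ih₂ =>
    rcases List.append_eq_append_iff.mp hγ with ⟨c, rfl, rfl⟩ | ⟨c, rfl, rfl⟩
    · obtain ⟨u, hu₁, hu₂⟩ := ih₁ rfl
      exact ⟨u, hu₁, .concat hu₂ h₂⟩
    · obtain ⟨u, hu₁, hu₂⟩ := ih₂ rfl
      exact ⟨u, .concat h₁ hu₁, hu₂⟩

lemma of_produces {α β : List (Symbol T g.NT)} (hp : g.Produces α β) (h : Reach g D x β y) :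
    Reach g D x α y := by
  obtain ⟨r, hr, hrw⟩ := hp
  obtain ⟨p, q, rfl, rfl⟩ := hrw.exists_parts
  obtain ⟨u, hu₁, hu₂⟩ := h.split (α₁ := p ++ r.output)
  obtain ⟨v, hv₁, hv₂⟩ := hu₁.split
  exact .concat (.concat hv₁ (.nonterm hr hv₂)) hu₂

lemma of_derives {α β : List (Symbol T g.NT)} (hd : g.Derives α β) (h : Reach g D x β y) :
    Reach g D x α y := by
  induction hd using Relation.ReflTransGen.head_induction_on with
  | refl => exact h
  | head hp _ ih => exact of_produces hp ih

lemma of_hasTrace {s : List T} (h : HasTrace D x s y) :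
    Reach g D x (s.map Symbol.terminal) y := by
  induction h with
  | nil z => exact .eps z
  | cons he _ ih => exact .concat (.term he) ih

lemma exists_derives_hasTrace {α : List (Symbol T g.NT)} (h : Reach g D x α y) :
    ∃ s : List T, g.Derives α (s.map Symbol.terminal) ∧ HasTrace D x s y := by
  induction h with
  | eps z => exact ⟨[], .refl _, .nil z⟩
  | @term _ y _ hm => exact ⟨[_], .refl _, .cons hm (.nil y)⟩
  | nonterm hm _ ih =>
    obtain ⟨s, hd, ht⟩ := ih
    exact ⟨s, .head ⟨_, hm, .input_output⟩ hd, ht⟩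
  | concat _ _ ih₁ ih₂ =>
    obtain ⟨s₁, hd₁, ht₁⟩ := ih₁
    obtain ⟨s₂, hd₂, ht₂⟩ := ih₂
    refine ⟨s₁ ++ s₂, ?_, ht₁.append ht₂⟩
    rw [List.map_append]
    exact (hd₁.append_right _).trans (hd₂.append_left _)

theorem iff_exists_derives_hasTrace {α : List (Symbol T g.NT)} :
    Reach g D x α y ↔
      ∃ s : List T, g.Derives α (s.map Symbol.terminal) ∧ HasTrace D x s y :=
  ⟨exists_derives_hasTrace, fun ⟨_, hd, ht⟩ => of_derives hd (of_hasTrace ht)⟩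

end Reach

theorem eval_eq_reach {T V : Type*} (g : ContextFreeGrammar T) (D : Set (V × T × V))
    (x : V) (A : g.NT) :
    {y : V | ∃ s : List T,
        g.Derives [Symbol.nonterminal A] (s.map Symbol.terminal) ∧ HasTrace D x s y} =
      {y : V | Reach g D x [Symbol.nonterminal A] y} :=
  Set.ext fun _ => Reach.iff_exists_derives_hasTrace.symm
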